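/- For the three-axis support Ω = (L_A^2 × {0_B} × {0_C}) ∪ ({0_A} × L_B^2 × {0_C}) ∪ ({0_A} × {0_B} × L_C^2), the three notions coincide: Y_A ⫫_o Y_C | Y_B ⟺ Y_A ⫫_i Y_C | Y_B ⟺ Y_A ⫫_e Y_C | Y_B; in fact all three always hold for any random vector Y with this support. -/

import Mathlib

open MeasureTheory ProbabilityTheory Set
open scoped ENNReal

noncomputable section

/-- `L^1 = [0,1]^ι`. -/
def box1 (ι : Type*) : Set (ι → ℝ) := {x | ∀ i, x i ∈ Set.Icc (0:ℝ) 1}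

/-- `L^2 = [0,∞)^ι \ [0,1]^ι`. -/
def box2 (ι : Type*) : Set (ι → ℝ) := {x | ∀ i, 0 ≤ x i} \ box1 ι

/-- The three-axis set `Ω`. -/
def omAxes3 (ιA ιB ιC : Type*) : Set ((ιA → ℝ) × (ιB → ℝ) × (ιC → ℝ)) :=
  (box2 ιA ×ˢ (({fun _ => 0} : Set (ιB → ℝ)) ×ˢ ({fun _ => 0} : Set (ιC → ℝ)))) ∪
  (({fun _ => 0} : Set (ιA → ℝ)) ×ˢ (box2 ιB ×ˢ ({fun _ => 0} : Set (ιC → ℝ)))) ∪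
  (({fun _ => 0} : Set (ιA → ℝ)) ×ˢ (({fun _ => 0} : Set (ιB → ℝ)) ×ˢ box2 ιC))

/-- the topological support of `ν` is `S`. -/
def HasSupport {γ : Type*} [MeasurableSpace γ] [TopologicalSpace γ]
    (ν : Measure γ) (S : Set γ) : Prop :=
  ν Sᶜ = 0 ∧ ∀ U : Set γ, IsOpen U → (U ∩ S).Nonempty → 0 < ν U

/-- `X_A ⫫ X_C` given `(X_B, E)`. -/
def condIndepOnGivenB {Ω₀ : Type*} [MeasurableSpace Ω₀] (μ : Measure Ω₀) (E : Set Ω₀)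
    {α β γ : Type*} [MeasurableSpace α] [MeasurableSpace β] [MeasurableSpace γ]
    (XA : Ω₀ → α) (XB : Ω₀ → β) (XC : Ω₀ → γ) : Prop :=
  ∀ (HB : Set β), MeasurableSet HB → ∀ (HA : Set α) (HC : Set γ),
    MeasurableSet HA → MeasurableSet HC →
    μ[|E ∩ XB ⁻¹' HB] (XA ⁻¹' HA ∩ XC ⁻¹' HC) =
      μ[|E ∩ XB ⁻¹' HB] (XA ⁻¹' HA) * μ[|E ∩ XB ⁻¹' HB] (XC ⁻¹' HC)

/-- outer conditional independence of `Y_A` and `Y_C` given `Y_B`, relative to `Om`. -/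
def OuterIndepB {Ω₀ : Type} [MeasurableSpace Ω₀] (μ : Measure Ω₀)
    {α β γ : Type} [MeasurableSpace α] [MeasurableSpace β] [MeasurableSpace γ]
    (YA : Ω₀ → α) (YB : Ω₀ → β) (YC : Ω₀ → γ) (Om : Set (α × β × γ)) : Prop :=
  ∃ (Ω' : Type) (_ : MeasurableSpace Ω') (P : Measure Ω')
    (WA : Ω' → α) (WB : Ω' → β) (WC : Ω' → γ) (LA : Set α) (LB : Set β) (LC : Set γ),
    IsProbabilityMeasure P ∧ Measurable WA ∧ Measurable WB ∧ Measurable WC ∧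
    Om ⊆ LA ×ˢ (LB ×ˢ LC) ∧
    P ((fun ω => (WA ω, WB ω, WC ω)) ⁻¹' (LA ×ˢ (LB ×ˢ LC))) = 1 ∧
    condIndepOnGivenB P Set.univ WA WB WC ∧
    (P[|(fun ω => (WA ω, WB ω, WC ω)) ⁻¹' Om]).map (fun ω => (WA ω, WB ω, WC ω)) =
      μ.map (fun ω => (YA ω, YB ω, YC ω))

/-- inner conditional independence of `Y_A` and `Y_C` given `Y_B`, relative to `Om`. -/
def InnerIndepB {Ω₀ : Type} [MeasurableSpace Ω₀] (μ : Measure Ω₀)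
    {α β γ : Type} [MeasurableSpace α] [MeasurableSpace β] [MeasurableSpace γ]
    (YA : Ω₀ → α) (YB : Ω₀ → β) (YC : Ω₀ → γ) (Om : Set (α × β × γ)) : Prop :=
  ∀ (SA : Set α) (SB : Set β) (SC : Set γ),
    MeasurableSet SA → MeasurableSet SB → MeasurableSet SC →
    SA ×ˢ (SB ×ˢ SC) ⊆ Om →
    0 < μ ((fun ω => (YA ω, YB ω, YC ω)) ⁻¹' (SA ×ˢ (SB ×ˢ SC))) →
    condIndepOnGivenB μ ((fun ω => (YA ω, YB ω, YC ω)) ⁻¹' (SA ×ˢ (SB ×ˢ SC))) YA YB YC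

/-- Engelke–Hitz conditional independence given `Y_B`. -/
def EHIndepB {Ω₀ : Type} [MeasurableSpace Ω₀] (μ : Measure Ω₀) {ιA ιB ιC : Type}
    (YA : Ω₀ → ιA → ℝ) (YB : Ω₀ → ιB → ℝ) (YC : Ω₀ → ιC → ℝ) : Prop :=
  (∀ k : ιA, condIndepOnGivenB μ {ω | 1 < YA ω k} YA YB YC) ∧
  (∀ k : ιB, condIndepOnGivenB μ {ω | 1 < YB ω k} YA YB YC) ∧
  (∀ k : ιC, condIndepOnGivenB μ {ω | 1 < YC ω k} YA YB YC)

/-!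
A point of the three-axis set has at most one non-zero block; in particular `Y_A = 0` whenever
`Y_C ≠ 0`. So on every product subset of `Ω` of positive probability, and on every event
`{Y_k > 1}`, one of `Y_A`, `Y_C` is almost surely constant, which gives inner and Engelke–Hitz
independence. For outer independence, split the law `ν` of `Y` into its three axis parts
`m_A ⊗ δ₀ ⊗ δ₀`, `δ₀ ⊗ m_B ⊗ δ₀`, `δ₀ ⊗ δ₀ ⊗ m_C`: the product measure
`(m_A + δ₀) ⊗ (m_B + δ₀) ⊗ (m_C + δ₀)` restricts to `ν` on `Ω`, so its normalisation is an
independent coupling whose conditional law given `Ω` is `ν`.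
-/

theorem measure_inter_preimage_eq_mul_of_ae_eq_const {Ω₀ γ : Type*} [MeasurableSpace Ω₀]
    {ρ : Measure Ω₀} [IsZeroOrProbabilityMeasure ρ] {Z : Ω₀ → γ} {c : γ}
    (hZ : ∀ᵐ ω ∂ρ, Z ω = c) (S : Set Ω₀) (T : Set γ) :
    ρ (S ∩ Z ⁻¹' T) = ρ S * ρ (Z ⁻¹' T) := by
  by_cases hc : c ∈ T
  · have hT : Z ⁻¹' T =ᵐ[ρ] (univ : Set Ω₀) :=
      ae_eq_univ.2 <| measure_eq_zero_iff_ae_notMem.2 <|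
        hZ.mono fun ω hω h => h (by rwa [mem_preimage, hω])
    rw [measure_congr (ae_eq_refl S |>.inter hT), measure_congr hT, inter_univ]
    rcases eq_zero_or_isProbabilityMeasure ρ with h0 | _
    · simp [h0]
    · rw [measure_univ, mul_one]
  · have hT : ρ (Z ⁻¹' T) = 0 :=
      measure_eq_zero_iff_ae_notMem.2 (hZ.mono fun ω hω h => hc (by rwa [mem_preimage, hω] at h))
    rw [hT, mul_zero]
    exact measure_mono_null inter_subset_right hT

theorem cond_univ_eq_smul {Ω₀ : Type*} [MeasurableSpace Ω₀] (μ : Measure Ω₀) :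
    μ[|univ] = (μ univ)⁻¹ • μ := by
  rw [ProbabilityTheory.cond, Measure.restrict_univ]

theorem cond_smul {Ω₀ : Type*} [MeasurableSpace Ω₀] (μ : Measure Ω₀) {c : ℝ≥0∞} (hc₀ : c ≠ 0)
    (hc : c ≠ ∞) (s : Set Ω₀) : (c • μ)[|s] = μ[|s] := by
  rw [ProbabilityTheory.cond, ProbabilityTheory.cond, Measure.smul_apply, Measure.restrict_smul,
    smul_smul, smul_eq_mul, ENNReal.mul_inv (Or.inl hc₀) (Or.inl hc), mul_right_comm,
    ENNReal.inv_mul_cancel hc₀ hc, one_mul]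

theorem cond_prod_cond_univ {α β γ : Type*} [MeasurableSpace α] [MeasurableSpace β]
    [MeasurableSpace γ] (ρA : Measure α) (ρB : Measure β) (ρC : Measure γ)
    [IsFiniteMeasure ρA] [IsFiniteMeasure ρB] [IsFiniteMeasure ρC]
    (hA : ρA univ ≠ 0) (hB : ρB univ ≠ 0) (hC : ρC univ ≠ 0) (s : Set (α × β × γ)) :
    ((ρA[|univ]).prod ((ρB[|univ]).prod (ρC[|univ])))[|s] = (ρA.prod (ρB.prod ρC))[|s] := by
  simp only [cond_univ_eq_smul, Measure.prod_smul_left, Measure.prod_smul_right]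
  rw [cond_smul _ (ENNReal.inv_ne_zero.2 (measure_ne_top _ _)) (ENNReal.inv_ne_top.2 hC),
    cond_smul _ (ENNReal.inv_ne_zero.2 (measure_ne_top _ _)) (ENNReal.inv_ne_top.2 hB),
    cond_smul _ (ENNReal.inv_ne_zero.2 (measure_ne_top _ _)) (ENNReal.inv_ne_top.2 hA)]

theorem restrict_add_dirac_of_ae_mem {X : Type*} [MeasurableSpace X] {m : Measure X} {S : Set X}
    {z : X} (hS : MeasurableSet S) (hm : ∀ᵐ x ∂m, x ∈ S) (hz : z ∉ S) :
    (m + Measure.dirac z).restrict S = m := by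
  rw [Measure.restrict_add, Measure.restrict_eq_self_of_ae_mem hm,
    Measure.restrict_eq_zero.2 ((Measure.dirac_apply' z hS).trans (indicator_of_notMem hz _)),
    add_zero]

theorem restrict_singleton_add_dirac_of_ae_mem {X : Type*} [MeasurableSpace X] {m : Measure X}
    {S : Set X} {z : X} (hm : ∀ᵐ x ∂m, x ∈ S) (hz : z ∉ S) :
    (m + Measure.dirac z).restrict {z} = Measure.dirac z := by
  have hmz : m {z} = 0 :=
    measure_eq_zero_iff_ae_notMem.2 (hm.mono fun x hx h => hz (mem_singleton_iff.1 h ▸ hx))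
  rw [Measure.restrict_add, Measure.restrict_eq_zero.2 hmz, Measure.restrict_singleton,
    Measure.dirac_apply_of_mem (mem_singleton z), one_smul, zero_add]

theorem map_map_eq_self_of_ae {X T : Type*} [MeasurableSpace X] [MeasurableSpace T]
    {ρ : Measure X} {f : X → T} {g : T → X} (hf : Measurable f) (hg : Measurable g)
    (h : ∀ᵐ x ∂ρ, g (f x) = x) : (ρ.map f).map g = ρ := by
  rw [Measure.map_map hg hf]
  exact (Measure.map_congr (show g ∘ f =ᵐ[ρ] id from h)).trans Measure.map_id

section CondIndep

variable {Ω₀ α β γ : Type*} [MeasurableSpace Ω₀] [MeasurableSpace α] [MeasurableSpace β]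
  [MeasurableSpace γ] {μ : Measure Ω₀} {E : Set Ω₀} {XA : Ω₀ → α} {XB : Ω₀ → β} {XC : Ω₀ → γ}

theorem condIndepOnGivenB.symm (h : condIndepOnGivenB μ E XA XB XC) :
    condIndepOnGivenB μ E XC XB XA := fun HB hHB HC HA hHC hHA => by
  rw [inter_comm (XC ⁻¹' _), mul_comm]
  exact h HB hHB HA HC hHA hHC

theorem condIndepOnGivenB_of_ae_eq_right {c : γ} (hc : ∀ᵐ ω ∂μ.restrict E, XC ω = c) :
    condIndepOnGivenB μ E XA XB XC := fun HB _ _ _ _ _ =>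
  have hac : μ[|E ∩ XB ⁻¹' HB] ≪ μ.restrict E :=
    Measure.smul_absolutelyContinuous.trans
      (Measure.restrict_mono inter_subset_left le_rfl).absolutelyContinuous
  measure_inter_preimage_eq_mul_of_ae_eq_const (hac.ae_le hc) _ _

theorem condIndepOnGivenB_of_ae_eq_left {a : α} (ha : ∀ᵐ ω ∂μ.restrict E, XA ω = a) :
    condIndepOnGivenB μ E XA XB XC :=
  (condIndepOnGivenB_of_ae_eq_right ha).symm

end CondIndep

theorem condIndepOnGivenB_prod {α β γ : Type*} [MeasurableSpace α] [MeasurableSpace β]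
    [MeasurableSpace γ] (ρA : Measure α) (ρB : Measure β) (ρC : Measure γ)
    [IsProbabilityMeasure ρA] [SigmaFinite ρB] [IsProbabilityMeasure ρC] :
    condIndepOnGivenB (ρA.prod (ρB.prod ρC)) univ Prod.fst (fun p => p.2.1) (fun p => p.2.2) := by
  intro HB hHB HA HC hHA hHC
  have hslab : univ ∩ (fun p : α × β × γ => p.2.1) ⁻¹' HB = univ ×ˢ (HB ×ˢ univ) := by
    ext; simp
  have hA : univ ×ˢ (HB ×ˢ univ) ∩ Prod.fst ⁻¹' HA = HA ×ˢ (HB ×ˢ (univ : Set γ)) := by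
    ext; simp [and_comm]
  have hC : univ ×ˢ (HB ×ˢ univ) ∩ (fun p : α × β × γ => p.2.2) ⁻¹' HC =
      (univ : Set α) ×ˢ (HB ×ˢ HC) := by
    ext; simp
  have hAC : univ ×ˢ (HB ×ˢ univ) ∩ (Prod.fst ⁻¹' HA ∩ (fun p : α × β × γ => p.2.2) ⁻¹' HC) =
      HA ×ˢ (HB ×ˢ HC) := by
    ext; simp; tauto
  have hslab_meas : MeasurableSet ((univ : Set α) ×ˢ (HB ×ˢ (univ : Set γ))) :=
    MeasurableSet.univ.prod (hHB.prod MeasurableSet.univ)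
  simp only [hslab, cond_apply hslab_meas, hA, hC, hAC, Measure.prod_prod, measure_univ, one_mul,
    mul_one]
  set b := ρB HB
  rcases eq_or_ne b 0 with hb | hb
  · simp [hb]
  rcases eq_or_ne b ∞ with hb' | hb'
  · simp [hb']
  have hbb : b⁻¹ * b = 1 := ENNReal.inv_mul_cancel hb hb'
  calc b⁻¹ * (ρA HA * (b * ρC HC))
      = (b⁻¹ * b) * (ρA HA * ρC HC) := by ring
    _ = (b⁻¹ * b) * (b⁻¹ * b) * (ρA HA * ρC HC) := by simp only [hbb, one_mul]
    _ = b⁻¹ * (ρA HA * b) * (b⁻¹ * (b * ρC HC)) := by ring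

def axisCross {α β γ : Type*} (SA : Set α) (SB : Set β) (SC : Set γ) (a₀ : α) (b₀ : β)
    (c₀ : γ) : Set (α × β × γ) :=
  SA ×ˢ ({b₀} ×ˢ {c₀}) ∪ {a₀} ×ˢ (SB ×ˢ {c₀}) ∪ {a₀} ×ˢ ({b₀} ×ˢ SC)

section AxisCross

variable {α β γ : Type*} {SA : Set α} {SB : Set β} {SC : Set γ} {a₀ : α} {b₀ : β} {c₀ : γ}
  {p : α × β × γ}

theorem fst_eq_or_snd_snd_eq_of_mem_axisCross (hp : p ∈ axisCross SA SB SC a₀ b₀ c₀) :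
    p.1 = a₀ ∨ p.2.2 = c₀ := by
  rcases hp with (⟨-, -, hc⟩ | ⟨ha, -, -⟩) | ⟨ha, -, -⟩
  exacts [Or.inr hc, Or.inl ha, Or.inl ha]

theorem snd_snd_eq_of_mem_axisCross (hp : p ∈ axisCross SA SB SC a₀ b₀ c₀) (hb : p.2.1 ≠ b₀) :
    p.2.2 = c₀ := by
  rcases hp with (⟨-, -, hc⟩ | ⟨-, -, hc⟩) | ⟨-, hb', -⟩
  exacts [hc, hc, absurd hb' hb]

variable [MeasurableSpace α] [MeasurableSpace β] [MeasurableSpace γ]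
  [MeasurableSingletonClass α] [MeasurableSingletonClass β] [MeasurableSingletonClass γ]

theorem measurableSet_axisCross (hSA : MeasurableSet SA) (hSB : MeasurableSet SB)
    (hSC : MeasurableSet SC) : MeasurableSet (axisCross SA SB SC a₀ b₀ c₀) :=
  ((hSA.prod ((measurableSet_singleton _).prod (measurableSet_singleton _))).union
    ((measurableSet_singleton _).prod (hSB.prod (measurableSet_singleton _)))).union
    ((measurableSet_singleton _).prod ((measurableSet_singleton _).prod hSC))

theorem restrict_axisCross (ρ : Measure (α × β × γ)) (hSB : MeasurableSet SB)
    (hSC : MeasurableSet SC) (ha₀ : a₀ ∉ SA) (hb₀ : b₀ ∉ SB) :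
    ρ.restrict (axisCross SA SB SC a₀ b₀ c₀) = ρ.restrict (SA ×ˢ ({b₀} ×ˢ {c₀})) +
      ρ.restrict ({a₀} ×ˢ (SB ×ˢ {c₀})) + ρ.restrict ({a₀} ×ˢ ({b₀} ×ˢ SC)) := by
  have hAB : Disjoint (SA ×ˢ ({b₀} ×ˢ {c₀})) ({a₀} ×ˢ (SB ×ˢ {c₀})) :=
    disjoint_left.2 fun p hA hB => ha₀ (mem_singleton_iff.1 hB.1 ▸ hA.1)
  have hAC : Disjoint (SA ×ˢ ({b₀} ×ˢ {c₀})) ({a₀} ×ˢ ({b₀} ×ˢ SC)) :=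
    disjoint_left.2 fun p hA hC => ha₀ (mem_singleton_iff.1 hC.1 ▸ hA.1)
  have hBC : Disjoint ({a₀} ×ˢ (SB ×ˢ {c₀})) ({a₀} ×ˢ ({b₀} ×ˢ SC)) :=
    disjoint_left.2 fun p hB hC => hb₀ (mem_singleton_iff.1 hC.2.1 ▸ hB.2.1)
  rw [axisCross, Measure.restrict_union (disjoint_union_left.2 ⟨hAC, hBC⟩)
      ((measurableSet_singleton _).prod ((measurableSet_singleton _).prod hSC)),
    Measure.restrict_union hAB
      ((measurableSet_singleton _).prod (hSB.prod (measurableSet_singleton _)))]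

theorem prod_add_dirac_restrict_axisCross (hSA : MeasurableSet SA) (hSB : MeasurableSet SB)
    (hSC : MeasurableSet SC) (ha₀ : a₀ ∉ SA) (hb₀ : b₀ ∉ SB) (hc₀ : c₀ ∉ SC)
    {mA : Measure α} {mB : Measure β} {mC : Measure γ} [SFinite mA] [SFinite mB] [SFinite mC]
    (hmA : ∀ᵐ a ∂mA, a ∈ SA) (hmB : ∀ᵐ b ∂mB, b ∈ SB) (hmC : ∀ᵐ c ∂mC, c ∈ SC) :
    ((mA + Measure.dirac a₀).prod ((mB + Measure.dirac b₀).prod (mC + Measure.dirac c₀))).restrict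
        (axisCross SA SB SC a₀ b₀ c₀) =
      mA.map (fun a => (a, b₀, c₀)) + mB.map (fun b => (a₀, b, c₀)) +
        mC.map (fun c => (a₀, b₀, c)) := by
  simp only [restrict_axisCross _ hSB hSC ha₀ hb₀, ← Measure.prod_restrict,
    restrict_add_dirac_of_ae_mem hSA hmA ha₀, restrict_add_dirac_of_ae_mem hSB hmB hb₀,
    restrict_add_dirac_of_ae_mem hSC hmC hc₀, restrict_singleton_add_dirac_of_ae_mem hmA ha₀,
    restrict_singleton_add_dirac_of_ae_mem hmB hb₀, restrict_singleton_add_dirac_of_ae_mem hmC hc₀,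
    Measure.dirac_prod_dirac]
  simp only [Measure.prod_dirac, Measure.dirac_prod]
  rw [Measure.map_map measurable_prodMk_left measurable_prodMk_right,
    Measure.map_map measurable_prodMk_left measurable_prodMk_left]
  rfl

theorem exists_prod_add_dirac_restrict_axisCross_eq (hSA : MeasurableSet SA)
    (hSB : MeasurableSet SB) (hSC : MeasurableSet SC) (ha₀ : a₀ ∉ SA) (hb₀ : b₀ ∉ SB)
    (hc₀ : c₀ ∉ SC) (ν : Measure (α × β × γ)) [IsFiniteMeasure ν]
    (hν : ∀ᵐ p ∂ν, p ∈ axisCross SA SB SC a₀ b₀ c₀) :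
    ∃ (mA : Measure α) (mB : Measure β) (mC : Measure γ),
      IsFiniteMeasure mA ∧ IsFiniteMeasure mB ∧ IsFiniteMeasure mC ∧
      ((mA + Measure.dirac a₀).prod ((mB + Measure.dirac b₀).prod (mC + Measure.dirac c₀))).restrict
        (axisCross SA SB SC a₀ b₀ c₀) = ν := by
  have hDA : MeasurableSet (SA ×ˢ ({b₀} ×ˢ {c₀})) :=
    hSA.prod ((measurableSet_singleton _).prod (measurableSet_singleton _))
  have hDB : MeasurableSet ({a₀} ×ˢ (SB ×ˢ {c₀})) :=
    (measurableSet_singleton _).prod (hSB.prod (measurableSet_singleton _))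
  have hDC : MeasurableSet ({a₀} ×ˢ ({b₀} ×ˢ SC)) :=
    (measurableSet_singleton _).prod ((measurableSet_singleton _).prod hSC)
  have hA : ((ν.restrict (SA ×ˢ ({b₀} ×ˢ {c₀}))).map Prod.fst).map (fun a => (a, b₀, c₀)) =
      ν.restrict (SA ×ˢ ({b₀} ×ˢ {c₀})) :=
    map_map_eq_self_of_ae measurable_fst (by fun_prop) <| (ae_restrict_mem hDA).mono
      fun p ⟨_, hb, hc⟩ => Prod.ext rfl (Prod.ext (Eq.symm hb) (Eq.symm hc))
  have hB : ((ν.restrict ({a₀} ×ˢ (SB ×ˢ {c₀}))).map fun p => p.2.1).map (fun b => (a₀, b, c₀)) =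
      ν.restrict ({a₀} ×ˢ (SB ×ˢ {c₀})) :=
    map_map_eq_self_of_ae measurable_snd.fst (by fun_prop) <| (ae_restrict_mem hDB).mono
      fun p ⟨ha, _, hc⟩ => Prod.ext (Eq.symm ha) (Prod.ext rfl (Eq.symm hc))
  have hC : ((ν.restrict ({a₀} ×ˢ ({b₀} ×ˢ SC))).map fun p => p.2.2).map (fun c => (a₀, b₀, c)) =
      ν.restrict ({a₀} ×ˢ ({b₀} ×ˢ SC)) :=
    map_map_eq_self_of_ae measurable_snd.snd (by fun_prop) <| (ae_restrict_mem hDC).mono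
      fun p ⟨ha, hb, _⟩ => Prod.ext (Eq.symm ha) (Prod.ext (Eq.symm hb) rfl)
  refine ⟨(ν.restrict (SA ×ˢ ({b₀} ×ˢ {c₀}))).map Prod.fst,
    (ν.restrict ({a₀} ×ˢ (SB ×ˢ {c₀}))).map fun p => p.2.1,
    (ν.restrict ({a₀} ×ˢ ({b₀} ×ˢ SC))).map fun p => p.2.2,
    inferInstance, inferInstance, inferInstance, ?_⟩
  rw [prod_add_dirac_restrict_axisCross hSA hSB hSC ha₀ hb₀ hc₀
      ((ae_map_iff measurable_fst.aemeasurable hSA).2 ((ae_restrict_mem hDA).mono fun p hp => hp.1))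
      ((ae_map_iff measurable_snd.fst.aemeasurable hSB).2
        ((ae_restrict_mem hDB).mono fun p hp => hp.2.1))
      ((ae_map_iff measurable_snd.snd.aemeasurable hSC).2
        ((ae_restrict_mem hDC).mono fun p hp => hp.2.2)),
    hA, hB, hC, ← restrict_axisCross ν hSB hSC ha₀ hb₀, Measure.restrict_eq_self_of_ae_mem hν]

end AxisCross

theorem outerIndepB_axisCross {Ω₀ α β γ : Type} [MeasurableSpace Ω₀] [MeasurableSpace α]
    [MeasurableSpace β] [MeasurableSpace γ] [MeasurableSingletonClass α]
    [MeasurableSingletonClass β] [MeasurableSingletonClass γ]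
    {SA : Set α} {SB : Set β} {SC : Set γ} {a₀ : α} {b₀ : β} {c₀ : γ}
    (hSA : MeasurableSet SA) (hSB : MeasurableSet SB) (hSC : MeasurableSet SC)
    (ha₀ : a₀ ∉ SA) (hb₀ : b₀ ∉ SB) (hc₀ : c₀ ∉ SC) {μ : Measure Ω₀} [IsProbabilityMeasure μ]
    {XA : Ω₀ → α} {XB : Ω₀ → β} {XC : Ω₀ → γ} (hX : Measurable fun ω => (XA ω, XB ω, XC ω))
    (hΩ : ∀ᵐ ω ∂μ, (XA ω, XB ω, XC ω) ∈ axisCross SA SB SC a₀ b₀ c₀) :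
    OuterIndepB μ XA XB XC (axisCross SA SB SC a₀ b₀ c₀) := by
  set ν := μ.map fun ω => (XA ω, XB ω, XC ω)
  have : IsProbabilityMeasure ν := Measure.isProbabilityMeasure_map hX.aemeasurable
  obtain ⟨mA, mB, mC, _, _, _, hQ⟩ := exists_prod_add_dirac_restrict_axisCross_eq hSA hSB hSC
    ha₀ hb₀ hc₀ ν ((ae_map_iff hX.aemeasurable (measurableSet_axisCross hSA hSB hSC)).2 hΩ)
  have hne : ∀ {X : Type} [MeasurableSpace X] (m : Measure X) (z : X),
      (m + Measure.dirac z) univ ≠ 0 := by simp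
  have := cond_isProbabilityMeasure (s := univ) (hne mA a₀)
  have := cond_isProbabilityMeasure (s := univ) (hne mB b₀)
  have := cond_isProbabilityMeasure (s := univ) (hne mC c₀)
  refine ⟨α × β × γ, inferInstance,
    ((mA + Measure.dirac a₀)[|univ]).prod (((mB + Measure.dirac b₀)[|univ]).prod
      ((mC + Measure.dirac c₀)[|univ])),
    Prod.fst, fun p => p.2.1, fun p => p.2.2, univ, univ, univ, inferInstance, measurable_fst,
    measurable_snd.fst, measurable_snd.snd, by simp, by simp, condIndepOnGivenB_prod _ _ _,
    ?_⟩
  simp only [Prod.mk.eta, preimage_id', Measure.map_id']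
  rw [cond_prod_cond_univ _ _ _ (hne mA a₀) (hne mB b₀) (hne mC c₀),
    ProbabilityTheory.cond, ← Measure.restrict_apply_univ, hQ, measure_univ, inv_one, one_smul]

theorem innerIndepB_of_forall_fst_eq_or_snd_snd_eq {Ω₀ α β γ : Type} [MeasurableSpace Ω₀]
    [MeasurableSpace α] [MeasurableSpace β] [MeasurableSpace γ] {μ : Measure Ω₀}
    {XA : Ω₀ → α} {XB : Ω₀ → β} {XC : Ω₀ → γ} (hXA : Measurable XA) (hXB : Measurable XB)
    (hXC : Measurable XC) {Om : Set (α × β × γ)} {a₀ : α} {c₀ : γ}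
    (hOm : ∀ p ∈ Om, p.1 = a₀ ∨ p.2.2 = c₀) : InnerIndepB μ XA XB XC Om := by
  intro SA SB SC hSA hSB hSC hsub hpos
  have hE : MeasurableSet ((fun ω => (XA ω, XB ω, XC ω)) ⁻¹' (SA ×ˢ (SB ×ˢ SC))) :=
    (hXA.prodMk (hXB.prodMk hXC)) (hSA.prod (hSB.prod hSC))
  obtain ⟨ω₀, -, hb, -⟩ := nonempty_of_measure_ne_zero hpos.ne'
  by_cases hSC₀ : ∃ c ∈ SC, c ≠ c₀
  · obtain ⟨c, hc, hcc₀⟩ := hSC₀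
    exact condIndepOnGivenB_of_ae_eq_left (ae_restrict_of_forall_mem hE fun ω hω =>
      (hOm _ (hsub (show (XA ω, XB ω₀, c) ∈ SA ×ˢ (SB ×ˢ SC) from ⟨hω.1, hb, hc⟩))).resolve_right
        hcc₀)
  · exact condIndepOnGivenB_of_ae_eq_right (ae_restrict_of_forall_mem hE fun ω hω =>
      not_not.1 fun h => hSC₀ ⟨_, hω.2.2, h⟩)

theorem measurableSet_box2 (ι : Type*) [Countable ι] : MeasurableSet (box2 ι) := by
  unfold box2 box1
  measurability

theorem zero_notMem_box2 (ι : Type*) : (0 : ι → ℝ) ∉ box2 ι :=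
  fun h => h.2 fun _ => ⟨le_rfl, zero_le_one⟩

theorem omAxes3_eq_axisCross (ιA ιB ιC : Type*) :
    omAxes3 ιA ιB ιC = axisCross (box2 ιA) (box2 ιB) (box2 ιC) 0 0 0 := rfl

theorem ae_restrict_one_lt_apply {Ω₀ ι : Type*} [MeasurableSpace Ω₀] {μ : Measure Ω₀}
    {Y : Ω₀ → ι → ℝ} (hY : Measurable Y) (k : ι) {P : Ω₀ → Prop}
    (h : ∀ᵐ ω ∂μ, Y ω ≠ 0 → P ω) : ∀ᵐ ω ∂μ.restrict {ω | 1 < Y ω k}, P ω :=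
  (ae_restrict_iff' (measurableSet_lt measurable_const (measurable_pi_iff.1 hY k))).2 <|
    h.mono fun _ hω hk => hω (ne_of_apply_ne (· k) (zero_lt_one.trans hk).ne')

theorem ehIndepB_of_ae_mem_omAxes3 {Ω₀ ιA ιB ιC : Type} [MeasurableSpace Ω₀] {μ : Measure Ω₀}
    {YA : Ω₀ → ιA → ℝ} {YB : Ω₀ → ιB → ℝ} {YC : Ω₀ → ιC → ℝ} (hA : Measurable YA)
    (hB : Measurable YB) (hC : Measurable YC)
    (hΩ : ∀ᵐ ω ∂μ, (YA ω, YB ω, YC ω) ∈ omAxes3 ιA ιB ιC) : EHIndepB μ YA YB YC := by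
  rw [omAxes3_eq_axisCross] at hΩ
  refine ⟨fun k => condIndepOnGivenB_of_ae_eq_right (c := 0) (ae_restrict_one_lt_apply hA k ?_),
    fun k => condIndepOnGivenB_of_ae_eq_right (c := 0) (ae_restrict_one_lt_apply hB k ?_),
    fun k => condIndepOnGivenB_of_ae_eq_left (a := 0) (ae_restrict_one_lt_apply hC k ?_)⟩
  · exact hΩ.mono fun _ hω => (fst_eq_or_snd_snd_eq_of_mem_axisCross hω).resolve_left
  · exact hΩ.mono fun _ hω => snd_snd_eq_of_mem_axisCross hω
  · exact hΩ.mono fun _ hω => (fst_eq_or_snd_snd_eq_of_mem_axisCross hω).resolve_right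

theorem stmt16_general {Ω₀ ιA ιB ιC : Type} [MeasurableSpace Ω₀]
    [Fintype ιA] [Fintype ιB] [Fintype ιC]
    (μ : Measure Ω₀) [IsProbabilityMeasure μ]
    (YA : Ω₀ → ιA → ℝ) (YB : Ω₀ → ιB → ℝ) (YC : Ω₀ → ιC → ℝ)
    (hA : Measurable YA) (hB : Measurable YB) (hC : Measurable YC)
    (hsupp : HasSupport (μ.map fun ω => (YA ω, YB ω, YC ω)) (omAxes3 ιA ιB ιC)) :
    ((OuterIndepB μ YA YB YC (omAxes3 ιA ιB ιC) ↔ InnerIndepB μ YA YB YC (omAxes3 ιA ιB ιC)) ∧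
      (InnerIndepB μ YA YB YC (omAxes3 ιA ιB ιC) ↔ EHIndepB μ YA YB YC)) ∧
    (OuterIndepB μ YA YB YC (omAxes3 ιA ιB ιC) ∧ InnerIndepB μ YA YB YC (omAxes3 ιA ιB ιC) ∧
      EHIndepB μ YA YB YC) := by
  have hY : Measurable fun ω => (YA ω, YB ω, YC ω) := hA.prodMk (hB.prodMk hC)
  have hΩ : ∀ᵐ ω ∂μ, (YA ω, YB ω, YC ω) ∈ omAxes3 ιA ιB ιC :=
    ae_of_ae_map hY.aemeasurable (ae_iff.2 hsupp.1)
  have hO : OuterIndepB μ YA YB YC (omAxes3 ιA ιB ιC) :=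
    outerIndepB_axisCross (measurableSet_box2 ιA) (measurableSet_box2 ιB) (measurableSet_box2 ιC)
      (zero_notMem_box2 ιA) (zero_notMem_box2 ιB) (zero_notMem_box2 ιC) hY hΩ
  have hI : InnerIndepB μ YA YB YC (omAxes3 ιA ιB ιC) :=
    innerIndepB_of_forall_fst_eq_or_snd_snd_eq hA hB hC fun _ =>
      fst_eq_or_snd_snd_eq_of_mem_axisCross
  have hE : EHIndepB μ YA YB YC := ehIndepB_of_ae_mem_omAxes3 hA hB hC hΩ
  exact ⟨⟨iff_of_true hO hI, iff_of_true hI hE⟩, hO, hI, hE⟩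

/-- for the three-axis support `Ω`, the three notions of conditional
independence coincide; in fact all three always hold. -/
theorem stmt16 {Ω₀ ιA ιB ιC : Type} [MeasurableSpace Ω₀]
    [Fintype ιA] [Fintype ιB] [Fintype ιC] [Nonempty ιA] [Nonempty ιB] [Nonempty ιC]
    (μ : Measure Ω₀) [IsProbabilityMeasure μ]
    (YA : Ω₀ → ιA → ℝ) (YB : Ω₀ → ιB → ℝ) (YC : Ω₀ → ιC → ℝ)
    (hA : Measurable YA) (hB : Measurable YB) (hC : Measurable YC)
    (hsupp : HasSupport (μ.map fun ω => (YA ω, YB ω, YC ω)) (omAxes3 ιA ιB ιC)) :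
    ((OuterIndepB μ YA YB YC (omAxes3 ιA ιB ιC) ↔ InnerIndepB μ YA YB YC (omAxes3 ιA ιB ιC)) ∧
      (InnerIndepB μ YA YB YC (omAxes3 ιA ιB ιC) ↔ EHIndepB μ YA YB YC)) ∧
    (OuterIndepB μ YA YB YC (omAxes3 ιA ιB ιC) ∧ InnerIndepB μ YA YB YC (omAxes3 ιA ιB ιC) ∧
      EHIndepB μ YA YB YC) :=
  stmt16_general μ YA YB YC hA hB hC hsupp

end
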